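/- For a 0-1 permutation matrix T, the loss L = λ₁ Σ_i (Σ_j T_{i,j} − 1)² + λ₂ Σ_i H_{i,i} + Σ_{i,j} D_{i,j} H_{i,j} (with n ≥ 2, H = T V T^T, V the cyclic shift, λ₁, λ₂ > 0, D the distance matrix) equals exactly the tour length Σ_{k} D_{τ(k), τ(σ(k))}, where τ is the permutation of T and σ(k) = (k mod n)+1; in particular the first two penalty terms vanish. -/

import Mathlib

/-!
`T` is the permutation matrix of `τ⁻¹` and `V` that of the rotation `k ↦ k + 1`, so
`H = T V Tᵀ` is the permutation matrix of the tour's successor map `τ ∘ rotation ∘ τ⁻¹`.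
Rows of a permutation matrix sum to `1`; its trace counts fixed points, and a conjugate of an
`n`-cycle with `n ≥ 2` has none; and `∑ i j, D i j * P_σ i j = ∑ i, D i (σ i)`, which after
reindexing by `τ` is the tour length.
-/

open Matrix Equiv

theorem Equiv.Perm.permMatrix_apply {ι R : Type*} [DecidableEq ι] [Zero R] [One R]
    (σ : Perm ι) (i j : ι) : σ.permMatrix R i j = if σ i = j then 1 else 0 := by
  simp [PEquiv.toMatrix_apply]

section
variable {ι R : Type*} [Fintype ι] [DecidableEq ι]

theorem Equiv.Perm.sum_permMatrix_apply [AddCommMonoidWithOne R] (σ : Perm ι) (i : ι) :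
    ∑ j, σ.permMatrix R i j = 1 := by
  simp

theorem Equiv.Perm.sum_mul_permMatrix_apply [NonAssocSemiring R] (D : Matrix ι ι R)
    (σ : Perm ι) : ∑ i, ∑ j, D i j * σ.permMatrix R i j = ∑ i, D i (σ i) := by
  simp

theorem Matrix.trace_permMatrix_eq_zero [AddCommMonoidWithOne R] {σ : Perm ι}
    (hσ : ∀ i, σ i ≠ i) : trace (σ.permMatrix R) = 0 := by
  simp [trace, hσ]

theorem Matrix.permMatrix_mul_mul_transpose [Semiring R] (σ ρ : Perm ι) :
    σ.permMatrix R * ρ.permMatrix R * (σ.permMatrix R)ᵀ = (σ⁻¹ * ρ * σ).permMatrix R := by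
  rw [transpose_permMatrix, permMatrix_mul, permMatrix_mul, Matrix.mul_assoc]

end

theorem Equiv.Perm.conj_apply_ne_self {α : Type*} {σ : Perm α} (hσ : ∀ i, σ i ≠ i)
    (τ : Perm α) (i : α) : (τ * σ * τ⁻¹) i ≠ i := by
  simpa [Perm.mul_apply, ← Perm.eq_inv_iff_eq] using hσ (τ⁻¹ i)

theorem finRotate_apply_ne_self {n : ℕ} (hn : 2 ≤ n) (i : Fin n) : finRotate n i ≠ i :=
  Perm.mem_support.mp (by simp [support_finRotate_of_le hn])

theorem stmt_12_general (n : ℕ) [NeZero n] (hn : 2 ≤ n)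
    (D : Matrix (Fin n) (Fin n) ℝ) (lam1 lam2 : ℝ)
    (τ : Equiv.Perm (Fin n))
    (T : Matrix (Fin n) (Fin n) ℝ)
    (hT : ∀ i j, T i j = if i = τ j then 1 else 0)
    (V : Matrix (Fin n) (Fin n) ℝ)
    (hV : ∀ i j, V i j = if j = i + 1 then 1 else 0)
    (H : Matrix (Fin n) (Fin n) ℝ)
    (hH : H = T * V * Tᵀ) :
    lam1 * ∑ i, (∑ j, T i j - 1) ^ 2 + lam2 * ∑ i, H i i
        + ∑ i, ∑ j, D i j * H i j
      = ∑ k, D (τ k) (τ (k + 1)) := by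
  have hT' : T = (τ⁻¹).permMatrix ℝ := by
    ext i j
    simp only [hT, Perm.permMatrix_apply, Perm.inv_eq_iff_eq]
  have hV' : V = (finRotate n).permMatrix ℝ := by
    ext i j
    simp only [hV, Perm.permMatrix_apply, finRotate_apply, eq_comm]
  have hH' : H = (τ * finRotate n * τ⁻¹).permMatrix ℝ := by
    rw [hH, hT', hV', permMatrix_mul_mul_transpose, inv_inv]
  have hrow : ∀ i, ∑ j, T i j = 1 := hT' ▸ Perm.sum_permMatrix_apply _
  have hdiag : ∑ i, H i i = 0 :=
    hH' ▸ trace_permMatrix_eq_zero (Perm.conj_apply_ne_self (finRotate_apply_ne_self hn) τ)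
  have htour : ∑ i, ∑ j, D i j * H i j = ∑ k, D (τ k) (τ (k + 1)) := by
    rw [hH', Perm.sum_mul_permMatrix_apply, ← Equiv.sum_comp τ]
    simp [finRotate_apply]
  simp [hrow, hdiag, htour]

/-- For `n ≥ 2`, `T` the permutation matrix of `τ`,
`H = T * V * Tᵀ` with `V` the cyclic shift, and `λ₁, λ₂ > 0`, the UTSP loss
`λ₁ * ∑ i (∑ j T i j − 1)² + λ₂ * ∑ i H i i + ∑ i j D i j * H i j` equals
exactly the tour length `∑ k, D (τ k) (τ (k+1))`; in particular the two penalty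
terms vanish. -/
theorem stmt_12 (n : ℕ) [NeZero n] (hn : 2 ≤ n)
    (D : Matrix (Fin n) (Fin n) ℝ) (lam1 lam2 : ℝ)
    (hlam1 : 0 < lam1) (hlam2 : 0 < lam2)
    (τ : Equiv.Perm (Fin n))
    (T : Matrix (Fin n) (Fin n) ℝ)
    (hT : ∀ i j, T i j = if i = τ j then 1 else 0)
    (V : Matrix (Fin n) (Fin n) ℝ)
    (hV : ∀ i j, V i j = if j = i + 1 then 1 else 0)
    (H : Matrix (Fin n) (Fin n) ℝ)
    (hH : H = T * V * Tᵀ) :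
    lam1 * ∑ i, (∑ j, T i j - 1) ^ 2 + lam2 * ∑ i, H i i
        + ∑ i, ∑ j, D i j * H i j
      = ∑ k, D (τ k) (τ (k + 1)) :=
  stmt_12_general n hn D lam1 lam2 τ T hT V hV H hH
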